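/- Let m ≥ 1 be an integer, μ > 0 real, and P_μ^m(η) = (1−μ)(2−μ)(3−μ) + (m+1)μ(1−μ)(11−7μ)η + 6(m+1)(m+2)(1−μ)μ²η² + (m+1)(m+2)(m+3)μ³η³. For m ≥ 6, all complex roots of P_μ^m lie in the closed half-plane {η ∈ ℂ : Re η ≤ 1/2} for every μ > 0. For 1 ≤ m ≤ 5, all complex roots of P_μ^m lie in {Re η ≤ 1/2} if and only if 0 < μ ≤ μ_m, where μ_m is the unique positive root of q_m(μ) = P_μ^m(1/2). -/
import Mathlib


/-- The representative polynomial `P_μ^m` of type `I_{1,3}` (complex variable). -/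
noncomputable def PI13c (m : ℕ) (μ : ℝ) (η : ℂ) : ℂ :=
  (1 - (μ : ℂ)) * (2 - (μ : ℂ)) * (3 - (μ : ℂ)) +
    ((m : ℂ) + 1) * (μ : ℂ) * (1 - (μ : ℂ)) * (11 - 7 * (μ : ℂ)) * η +
    6 * ((m : ℂ) + 1) * ((m : ℂ) + 2) * (1 - (μ : ℂ)) * (μ : ℂ) ^ 2 * η ^ 2 +
    ((m : ℂ) + 1) * ((m : ℂ) + 2) * ((m : ℂ) + 3) * (μ : ℂ) ^ 3 * η ^ 3

/-- The representative polynomial `P_μ^m` of type `I_{1,3}` (real variable). -/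
noncomputable def PI13 (m : ℕ) (μ η : ℝ) : ℝ :=
  (1 - μ) * (2 - μ) * (3 - μ) + ((m : ℝ) + 1) * μ * (1 - μ) * (11 - 7 * μ) * η +
    6 * ((m : ℝ) + 1) * ((m : ℝ) + 2) * (1 - μ) * μ ^ 2 * η ^ 2 +
    ((m : ℝ) + 1) * ((m : ℝ) + 2) * ((m : ℝ) + 3) * μ ^ 3 * η ^ 3

/-- `q_m(μ) = P_μ^m(1/2)` for type `I_{1,3}`. -/
noncomputable def qI13 (m : ℕ) (μ : ℝ) : ℝ := PI13 m μ (1 / 2)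

/- ### Auxiliary lemmas -/

/-- Backward Hurwitz-type criterion for a monic real cubic. -/
lemma aux_hurwitz_rev (A B C : ℝ) (hA : 0 ≤ A) (hB : 0 ≤ B) (hC : 0 ≤ C)
    (hAB : C ≤ A * B) :
    ∀ z : ℂ, z ^ 3 + (A : ℂ) * z ^ 2 + (B : ℂ) * z + (C : ℂ) = 0 → z.re ≤ 0 := by
  intro z hz
  rw [Complex.ext_iff] at hz
  obtain ⟨hre0, him0⟩ := hz
  simp only [Complex.add_re, Complex.add_im, Complex.mul_re, Complex.mul_im,
    Complex.ofReal_re, Complex.ofReal_im, Complex.zero_re, Complex.zero_im,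
    pow_succ, pow_zero, one_mul, Complex.one_re, Complex.one_im] at hre0 him0
  set x := z.re with hx
  set y := z.im with hy
  have hre : x ^ 3 - 3 * x * y ^ 2 + A * (x ^ 2 - y ^ 2) + B * x + C = 0 := by
    linear_combination hre0
  have him : y * (3 * x ^ 2 - y ^ 2 + 2 * A * x + B) = 0 := by
    linear_combination him0
  by_contra hx0
  push_neg at hx0
  rcases mul_eq_zero.1 him with hy0 | hq
  · rw [hy0] at hre
    nlinarith [mul_pos hx0 (mul_pos hx0 hx0), mul_nonneg hA (mul_pos hx0 hx0).le,
      mul_nonneg hB hx0.le]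
  · have hCval : C = 8 * x ^ 3 + 8 * A * x ^ 2 + 2 * A ^ 2 * x + 2 * B * x + A * B := by
      linear_combination hre - (3 * x + A) * hq
    nlinarith [mul_pos hx0 (mul_pos hx0 hx0), mul_nonneg hA (mul_pos hx0 hx0).le,
      mul_nonneg (mul_nonneg hA hA) hx0.le, mul_nonneg hB hx0.le]

set_option maxHeartbeats 1000000 in
/-- Forward Hurwitz-type criterion for a monic real cubic. -/
lemma aux_hurwitz_fwd (A B C : ℝ)
    (h : ∀ z : ℂ, z ^ 3 + (A : ℂ) * z ^ 2 + (B : ℂ) * z + (C : ℂ) = 0 → z.re ≤ 0) :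
    0 ≤ A ∧ 0 ≤ B ∧ 0 ≤ C ∧ C ≤ A * B := by
  -- a real root via the intermediate value theorem
  set M : ℝ := 1 + |A| + |B| + |C| with hM
  have hM1 : 1 ≤ M := by
    have := abs_nonneg A; have := abs_nonneg B; have := abs_nonneg C; linarith
  have hAle : A ≤ M - 1 := by
    have := le_abs_self A; have := abs_nonneg B; have := abs_nonneg C; linarith
  have hAge : -(M - 1) ≤ A := by
    have := neg_abs_le A; have := abs_nonneg B; have := abs_nonneg C; linarith
  have hBle : B ≤ M - 1 := by
    have := le_abs_self B; have := abs_nonneg A; have := abs_nonneg C; linarith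
  have hBge : -(M - 1) ≤ B := by
    have := neg_abs_le B; have := abs_nonneg A; have := abs_nonneg C; linarith
  have hCle : C ≤ M - 1 := by
    have := le_abs_self C; have := abs_nonneg A; have := abs_nonneg B; linarith
  have hCge : -(M - 1) ≤ C := by
    have := neg_abs_le C; have := abs_nonneg A; have := abs_nonneg B; linarith
  have hfc : Continuous fun x : ℝ => x ^ 3 + A * x ^ 2 + B * x + C := by fun_prop
  have hneg : (fun x : ℝ => x ^ 3 + A * x ^ 2 + B * x + C) (-M) ≤ 0 := by
    simp only
    nlinarith [mul_nonneg (by linarith : (0:ℝ) ≤ M - 1 - A) (sq_nonneg M),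
      mul_nonneg (by linarith : (0:ℝ) ≤ M - 1 + B) (by linarith : (0:ℝ) ≤ M)]
  have hpos : (0:ℝ) ≤ (fun x : ℝ => x ^ 3 + A * x ^ 2 + B * x + C) M := by
    simp only
    nlinarith [mul_nonneg (by linarith : (0:ℝ) ≤ M - 1 + A) (sq_nonneg M),
      mul_nonneg (by linarith : (0:ℝ) ≤ M - 1 + B) (by linarith : (0:ℝ) ≤ M)]
  obtain ⟨r, -, hr⟩ :=
    intermediate_value_Icc (by linarith : -M ≤ M) hfc.continuousOn ⟨hneg, hpos⟩
  simp only at hr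
  -- `r` is a real root
  have hrC : (r : ℂ) ^ 3 + (A : ℂ) * (r : ℂ) ^ 2 + (B : ℂ) * (r : ℂ) + (C : ℂ) = 0 := by
    exact_mod_cast congrArg (fun t : ℝ => (t : ℂ)) hr
  have hr0 : r ≤ 0 := by simpa using h r hrC
  -- factor the cubic
  have hfac : ∀ z : ℂ, z ^ 3 + (A : ℂ) * z ^ 2 + (B : ℂ) * z + (C : ℂ) =
      (z - r) * (z ^ 2 + ((A : ℂ) + r) * z + ((B : ℂ) + A * r + r ^ 2)) := by
    intro z
    linear_combination hrC
  -- show `0 ≤ A + r` and `0 ≤ B + A*r + r^2` by looking at the quadratic factor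
  have hq0 : 0 ≤ A + r ∧ 0 ≤ B + A * r + r ^ 2 := by
    rcases le_or_gt (4 * (B + A * r + r ^ 2)) ((A + r) ^ 2) with hdisc | hdisc
    · -- real roots of the quadratic
      set s : ℝ := Real.sqrt ((A + r) ^ 2 - 4 * (B + A * r + r ^ 2)) with hs
      have hs0 : 0 ≤ s := Real.sqrt_nonneg _
      have hs2 : s ^ 2 = (A + r) ^ 2 - 4 * (B + A * r + r ^ 2) := by
        rw [hs, Real.sq_sqrt (by linarith)]
      have hquadR : ((-(A + r) + s) / 2) ^ 2 + (A + r) * ((-(A + r) + s) / 2) +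
          (B + A * r + r ^ 2) = 0 := by linear_combination hs2 / 4
      have hquadC : ((((-(A + r) + s) / 2 : ℝ)) : ℂ) ^ 2 +
          ((A : ℂ) + r) * (((-(A + r) + s) / 2 : ℝ) : ℂ) + ((B : ℂ) + A * r + r ^ 2) = 0 := by
        have := congrArg (fun t : ℝ => (t : ℂ)) hquadR
        push_cast at this ⊢
        linear_combination this
      have hroot : ((((-(A + r) + s) / 2 : ℝ)) : ℂ) ^ 3 +
          (A : ℂ) * (((-(A + r) + s) / 2 : ℝ) : ℂ) ^ 2 +
          (B : ℂ) * (((-(A + r) + s) / 2 : ℝ) : ℂ) + (C : ℂ) = 0 := by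
        rw [hfac, hquadC, mul_zero]
      have hle := h _ hroot
      simp only [Complex.ofReal_re] at hle
      have hsq : s ≤ A + r := by linarith
      constructor
      · linarith
      · nlinarith [hs2, hs0, hsq]
    · -- complex roots of the quadratic
      set t : ℝ := Real.sqrt (4 * (B + A * r + r ^ 2) - (A + r) ^ 2) with ht
      have ht0 : 0 ≤ t := Real.sqrt_nonneg _
      have ht2 : t ^ 2 = 4 * (B + A * r + r ^ 2) - (A + r) ^ 2 := by
        rw [ht, Real.sq_sqrt (by linarith)]
      have htC : (t : ℂ) ^ 2 = 4 * ((B : ℂ) + A * r + r ^ 2) - ((A : ℂ) + r) ^ 2 := by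
        exact_mod_cast congrArg (fun u : ℝ => (u : ℂ)) ht2
      set z0 : ℂ := (↑(-(A + r) / 2) : ℂ) + (↑(t / 2) : ℂ) * Complex.I with hz0
      have hquadC : z0 ^ 2 + ((A : ℂ) + r) * z0 + ((B : ℂ) + A * r + r ^ 2) = 0 := by
        rw [hz0]
        push_cast
        linear_combination ((t : ℂ) ^ 2 / 4) * Complex.I_sq - (1 / 4 : ℂ) * htC
      have hroot : z0 ^ 3 + (A : ℂ) * z0 ^ 2 + (B : ℂ) * z0 + (C : ℂ) = 0 := by
        rw [hfac, hquadC, mul_zero]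
      have hle := h _ hroot
      have hz0re : z0.re = -(A + r) / 2 := by
        simp [hz0]
      rw [hz0re] at hle
      constructor
      · linarith
      · nlinarith [sq_nonneg (A + r)]
  obtain ⟨hq0, he0⟩ := hq0
  have hrEq : r ^ 3 + A * r ^ 2 + B * r + C = 0 := by linear_combination hr
  have hA0 : 0 ≤ A := by linarith
  have hB0 : 0 ≤ B := by nlinarith [mul_nonneg hq0 (neg_nonneg.2 hr0)]
  have hC0 : 0 ≤ C := by nlinarith [mul_nonneg (neg_nonneg.2 hr0) he0]
  refine ⟨hA0, hB0, hC0, ?_⟩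
  nlinarith [mul_nonneg hq0 (add_nonneg hB0 (sq_nonneg r))]

set_option maxHeartbeats 1000000 in
/-- Key reduction: location of roots of a real cubic in `{Re ≤ 1/2}` in terms of
coefficient inequalities. -/
lemma aux_key (a b c d : ℝ) (hd : 0 < d) :
    (∀ η : ℂ, (d : ℂ) * η ^ 3 + (c : ℂ) * η ^ 2 + (b : ℂ) * η + (a : ℂ) = 0 →
      η.re ≤ 1 / 2) ↔
    (0 ≤ 2 * c + 3 * d ∧ 0 ≤ 4 * b + 4 * c + 3 * d ∧ 0 ≤ 8 * a + 4 * b + 2 * c + d ∧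
      (8 * a + 4 * b + 2 * c + d) * d ≤ (2 * c + 3 * d) * (4 * b + 4 * c + 3 * d)) := by
  have hdC : (d : ℂ) ≠ 0 := by exact_mod_cast hd.ne'
  set A : ℝ := (2 * c + 3 * d) / (2 * d) with hA
  set B : ℝ := (4 * b + 4 * c + 3 * d) / (4 * d) with hB
  set C : ℝ := (8 * a + 4 * b + 2 * c + d) / (8 * d) with hC
  have h8d : (8 : ℂ) * d ≠ 0 := by
    intro h'
    exact hdC (by
      have : (d : ℂ) = 0 ∨ (8:ℂ) = 0 := by
        rcases mul_eq_zero.1 h' with h8 | hd0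
        · exact Or.inr h8
        · exact Or.inl hd0
      rcases this with h1 | h1
      · exact h1
      · norm_num at h1)
  have hiff : ∀ η : ℂ, ((d : ℂ) * η ^ 3 + (c : ℂ) * η ^ 2 + (b : ℂ) * η + (a : ℂ) = 0) ↔
      ((η - 1/2) ^ 3 + (A : ℂ) * (η - 1/2) ^ 2 + (B : ℂ) * (η - 1/2) + (C : ℂ) = 0) := by
    intro η
    have hACr : 2 * d * A = 2 * c + 3 * d := by rw [hA]; field_simp
    have hBCr : 4 * d * B = 4 * b + 4 * c + 3 * d := by rw [hB]; field_simp
    have hCCr : 8 * d * C = 8 * a + 4 * b + 2 * c + d := by rw [hC]; field_simp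
    have hACc : 2 * (d : ℂ) * (A : ℂ) = 2 * (c : ℂ) + 3 * (d : ℂ) := by exact_mod_cast hACr
    have hBCc : 4 * (d : ℂ) * (B : ℂ) = 4 * (b : ℂ) + 4 * (c : ℂ) + 3 * (d : ℂ) := by
      exact_mod_cast hBCr
    have hCCc : 8 * (d : ℂ) * (C : ℂ) = 8 * (a : ℂ) + 4 * (b : ℂ) + 2 * (c : ℂ) + (d : ℂ) := by
      exact_mod_cast hCCr
    have hrw : ((η - 1/2) ^ 3 + (A : ℂ) * (η - 1/2) ^ 2 + (B : ℂ) * (η - 1/2) + (C : ℂ)) *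
        (8 * (d : ℂ)) =
        ((d : ℂ) * η ^ 3 + (c : ℂ) * η ^ 2 + (b : ℂ) * η + (a : ℂ)) * 8 := by
      linear_combination (4 * (η - 1/2) ^ 2) * hACc + (2 * (η - 1/2)) * hBCc + hCCc
    constructor
    · intro h0
      have h1 : ((η - 1/2) ^ 3 + (A : ℂ) * (η - 1/2) ^ 2 + (B : ℂ) * (η - 1/2) + (C : ℂ)) *
          (8 * (d : ℂ)) = 0 := by rw [hrw, h0, zero_mul]
      exact (mul_eq_zero.1 h1).resolve_right h8d
    · intro h0
      have h1 : ((d : ℂ) * η ^ 3 + (c : ℂ) * η ^ 2 + (b : ℂ) * η + (a : ℂ)) * 8 = 0 := by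
        rw [← hrw, h0, zero_mul]
      exact (mul_eq_zero.1 h1).resolve_right (by norm_num)
  constructor
  · intro h
    have h' : ∀ z : ℂ, z ^ 3 + (A : ℂ) * z ^ 2 + (B : ℂ) * z + (C : ℂ) = 0 → z.re ≤ 0 := by
      intro z hz
      have hz' : (d : ℂ) * (z + 1/2) ^ 3 + (c : ℂ) * (z + 1/2) ^ 2 + (b : ℂ) * (z + 1/2) +
          (a : ℂ) = 0 := by
        rw [hiff (z + 1/2)]
        have e : (z + 1/2 : ℂ) - 1/2 = z := by ring
        rw [e]
        exact hz
      have := h (z + 1/2) hz'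
      have hre : (z + (1/2 : ℂ)).re = z.re + 1/2 := by simp
      rw [hre] at this
      linarith
    obtain ⟨h1, h2, h3, h4⟩ := aux_hurwitz_fwd A B C h'
    have e1 : 0 ≤ 2 * c + 3 * d := by
      have := (le_div_iff₀ (by linarith : (0:ℝ) < 2 * d)).1 h1
      linarith
    have e2 : 0 ≤ 4 * b + 4 * c + 3 * d := by
      have := (le_div_iff₀ (by linarith : (0:ℝ) < 4 * d)).1 h2
      linarith
    have e3 : 0 ≤ 8 * a + 4 * b + 2 * c + d := by
      have := (le_div_iff₀ (by linarith : (0:ℝ) < 8 * d)).1 h3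
      linarith
    refine ⟨e1, e2, e3, ?_⟩
    rw [hA, hB, hC, div_mul_div_comm, div_le_div_iff₀ (by linarith) (by positivity)] at h4
    nlinarith [h4, hd, mul_pos hd hd]
  · rintro ⟨h1, h2, h3, h4⟩ η hη
    have hA0 : 0 ≤ A := div_nonneg h1 (by linarith)
    have hB0 : 0 ≤ B := div_nonneg h2 (by linarith)
    have hC0 : 0 ≤ C := div_nonneg h3 (by linarith)
    have hAB : C ≤ A * B := by
      rw [hA, hB, hC, div_mul_div_comm, div_le_div_iff₀ (by linarith) (by positivity)]
      nlinarith [mul_le_mul_of_nonneg_right h4 (by linarith : (0:ℝ) ≤ 8 * d)]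
    have hz := (hiff η).1 hη
    have := aux_hurwitz_rev A B C hA0 hB0 hC0 hAB (η - 1/2) hz
    have hre : (η - (1/2 : ℂ)).re = η.re - 1/2 := by simp
    rw [hre] at this
    linarith

/-- The complex polynomial written with real coefficients. -/
lemma aux_PI13c_eq (m : ℕ) (μ : ℝ) (η : ℂ) :
    PI13c m μ η =
      ((((m : ℝ) + 1) * ((m : ℝ) + 2) * ((m : ℝ) + 3) * μ ^ 3 : ℝ) : ℂ) * η ^ 3 +
      ((6 * ((m : ℝ) + 1) * ((m : ℝ) + 2) * (1 - μ) * μ ^ 2 : ℝ) : ℂ) * η ^ 2 +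
      ((((m : ℝ) + 1) * μ * (1 - μ) * (11 - 7 * μ) : ℝ) : ℂ) * η +
      (((1 - μ) * (2 - μ) * (3 - μ) : ℝ) : ℂ) := by
  unfold PI13c
  push_cast
  ring

/-- Condition (i): always true for `m ≥ 1`. -/
lemma aux_ineq_I (M μ : ℝ) (hM : 1 ≤ M) (hμ0 : 0 ≤ μ) :
    0 ≤ 2 * (6 * (M + 1) * (M + 2) * (1 - μ) * μ ^ 2) +
      3 * ((M + 1) * (M + 2) * (M + 3) * μ ^ 3) := by
  have hMs : (0:ℝ) ≤ M - 1 := by linarith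
  nlinarith [mul_nonneg (pow_nonneg hMs 0) (pow_nonneg hμ0 2),
    mul_nonneg (pow_nonneg hMs 1) (pow_nonneg hμ0 2),
    mul_nonneg (pow_nonneg hMs 1) (pow_nonneg hμ0 3),
    mul_nonneg (pow_nonneg hMs 2) (pow_nonneg hμ0 2),
    mul_nonneg (pow_nonneg hMs 2) (pow_nonneg hμ0 3),
    mul_nonneg (pow_nonneg hMs 3) (pow_nonneg hμ0 3)]

/-- Condition (ii): true for `m ≥ 4`. -/
lemma aux_ineq_II (M μ : ℝ) (hM : 4 ≤ M) (hμ0 : 0 ≤ μ) :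
    0 ≤ 4 * ((M + 1) * μ * (1 - μ) * (11 - 7 * μ)) +
      4 * (6 * (M + 1) * (M + 2) * (1 - μ) * μ ^ 2) +
      3 * ((M + 1) * (M + 2) * (M + 3) * μ ^ 3) := by
  have hMs : (0:ℝ) ≤ M - 4 := by linarith
  nlinarith [mul_nonneg (pow_nonneg hMs 0) (pow_nonneg hμ0 1),
    mul_nonneg (pow_nonneg hMs 0) (pow_nonneg hμ0 2),
    mul_nonneg (pow_nonneg hMs 0) (pow_nonneg hμ0 3),
    mul_nonneg (pow_nonneg hMs 1) (pow_nonneg hμ0 1),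
    mul_nonneg (pow_nonneg hMs 1) (pow_nonneg hμ0 2),
    mul_nonneg (pow_nonneg hMs 1) (pow_nonneg hμ0 3),
    mul_nonneg (pow_nonneg hMs 2) (pow_nonneg hμ0 2),
    mul_nonneg (pow_nonneg hMs 2) (pow_nonneg hμ0 3),
    mul_nonneg (pow_nonneg hMs 3) (pow_nonneg hμ0 3)]

/-- Condition (iv): true for `m ≥ 3`. -/
lemma aux_ineq_IV (M μ : ℝ) (hM : 3 ≤ M) (hμ0 : 0 ≤ μ) :
    (8 * ((1 - μ) * (2 - μ) * (3 - μ)) + 4 * ((M + 1) * μ * (1 - μ) * (11 - 7 * μ)) +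
        2 * (6 * (M + 1) * (M + 2) * (1 - μ) * μ ^ 2) +
        (M + 1) * (M + 2) * (M + 3) * μ ^ 3) *
      ((M + 1) * (M + 2) * (M + 3) * μ ^ 3) ≤
    (2 * (6 * (M + 1) * (M + 2) * (1 - μ) * μ ^ 2) +
        3 * ((M + 1) * (M + 2) * (M + 3) * μ ^ 3)) *
      (4 * ((M + 1) * μ * (1 - μ) * (11 - 7 * μ)) +
        4 * (6 * (M + 1) * (M + 2) * (1 - μ) * μ ^ 2) +
        3 * ((M + 1) * (M + 2) * (M + 3) * μ ^ 3)) := by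
  have hMs : (0:ℝ) ≤ M - 3 := by linarith
  nlinarith [mul_nonneg (pow_nonneg hMs 0) (pow_nonneg hμ0 3),
    mul_nonneg (pow_nonneg hMs 0) (pow_nonneg hμ0 4),
    mul_nonneg (pow_nonneg hMs 0) (pow_nonneg hμ0 5),
    mul_nonneg (pow_nonneg hMs 0) (pow_nonneg hμ0 6),
    mul_nonneg (pow_nonneg hMs 1) (pow_nonneg hμ0 3),
    mul_nonneg (pow_nonneg hMs 1) (pow_nonneg hμ0 4),
    mul_nonneg (pow_nonneg hMs 1) (pow_nonneg hμ0 5),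
    mul_nonneg (pow_nonneg hMs 1) (pow_nonneg hμ0 6),
    mul_nonneg (pow_nonneg hMs 2) (pow_nonneg hμ0 3),
    mul_nonneg (pow_nonneg hMs 2) (pow_nonneg hμ0 4),
    mul_nonneg (pow_nonneg hMs 2) (pow_nonneg hμ0 5),
    mul_nonneg (pow_nonneg hMs 2) (pow_nonneg hμ0 6),
    mul_nonneg (pow_nonneg hMs 3) (pow_nonneg hμ0 3),
    mul_nonneg (pow_nonneg hMs 3) (pow_nonneg hμ0 4),
    mul_nonneg (pow_nonneg hMs 3) (pow_nonneg hμ0 5),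
    mul_nonneg (pow_nonneg hMs 3) (pow_nonneg hμ0 6),
    mul_nonneg (pow_nonneg hMs 4) (pow_nonneg hμ0 4),
    mul_nonneg (pow_nonneg hMs 4) (pow_nonneg hμ0 5),
    mul_nonneg (pow_nonneg hMs 4) (pow_nonneg hμ0 6),
    mul_nonneg (pow_nonneg hMs 5) (pow_nonneg hμ0 5),
    mul_nonneg (pow_nonneg hMs 5) (pow_nonneg hμ0 6),
    mul_nonneg (pow_nonneg hMs 6) (pow_nonneg hμ0 6)]

/-- Condition (iii): true for `m ≥ 6`. -/
lemma aux_ineq_q8 (M μ : ℝ) (hM : 6 ≤ M) (hμ0 : 0 ≤ μ) :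
    0 ≤ 8 * ((1 - μ) * (2 - μ) * (3 - μ)) + 4 * ((M + 1) * μ * (1 - μ) * (11 - 7 * μ)) +
      2 * (6 * (M + 1) * (M + 2) * (1 - μ) * μ ^ 2) +
      (M + 1) * (M + 2) * (M + 3) * μ ^ 3 := by
  have hMs : (0:ℝ) ≤ M - 6 := by linarith
  nlinarith [mul_nonneg (pow_nonneg hMs 0) (pow_nonneg hμ0 0),
    mul_nonneg (pow_nonneg hMs 0) (pow_nonneg hμ0 1),
    mul_nonneg (pow_nonneg hMs 0) (pow_nonneg hμ0 2),
    mul_nonneg (pow_nonneg hMs 0) (pow_nonneg hμ0 3),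
    mul_nonneg (pow_nonneg hMs 1) (pow_nonneg hμ0 1),
    mul_nonneg (pow_nonneg hMs 1) (pow_nonneg hμ0 2),
    mul_nonneg (pow_nonneg hMs 1) (pow_nonneg hμ0 3),
    mul_nonneg (pow_nonneg hMs 2) (pow_nonneg hμ0 2),
    mul_nonneg (pow_nonneg hMs 2) (pow_nonneg hμ0 3),
    mul_nonneg (pow_nonneg hMs 3) (pow_nonneg hμ0 3)]

/- Sign of `q_m` versus `μ ≤ μm`, for each `m = 1, …, 5`. Here the cubic is a
positive multiple of `8 q_m`. -/

lemma aux_root1 (μm μ : ℝ) (hμm : 0 < μm) (hμ : 0 < μ)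
    (hroot : 48 - 24 * μm ^ 2 = 0) :
    (0 ≤ 48 - 24 * μ ^ 2 ↔ μ ≤ μm) := by
  constructor
  · intro h; nlinarith
  · intro h; nlinarith

lemma aux_root2 (μm μ : ℝ) (hμm : 0 < μm) (hμ : 0 < μ)
    (hroot : 12 + 11 * μm - 6 * μm ^ 2 - 2 * μm ^ 3 = 0) :
    (0 ≤ 12 + 11 * μ - 6 * μ ^ 2 - 2 * μ ^ 3 ↔ μ ≤ μm) := by
  have hF : 0 < 2 * μm ^ 2 + 6 * μm - 11 := by
    nlinarith [mul_pos hμm hμm, hμm]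
  constructor
  · intro h
    by_contra hlt
    push_neg at hlt
    have hFμ : 0 < 2 * μ ^ 2 + 2 * μ * μm + 2 * μm ^ 2 + 6 * μ + 6 * μm - 11 := by
      nlinarith [mul_pos hμ hμm, mul_pos hμ hμ]
    nlinarith [mul_pos (sub_pos.2 hlt) hFμ]
  · intro h
    have hFμ : 0 ≤ 2 * μ ^ 2 + 2 * μ * μm + 2 * μm ^ 2 + 6 * μ + 6 * μm - 11 := by
      nlinarith [mul_pos hμ hμm, mul_pos hμ hμ]
    nlinarith [mul_nonneg (sub_nonneg.2 h) hFμ]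

lemma aux_root3 (μm μ : ℝ) (hμm : 0 < μm) (hμ : 0 < μ)
    (hroot : 6 + 11 * μm - 2 * μm ^ 3 = 0) :
    (0 ≤ 6 + 11 * μ - 2 * μ ^ 3 ↔ μ ≤ μm) := by
  have hF : 0 < 2 * μm ^ 2 - 11 := by
    nlinarith [mul_pos hμm hμm, hμm]
  constructor
  · intro h
    by_contra hlt
    push_neg at hlt
    have hFμ : 0 < 2 * μ ^ 2 + 2 * μ * μm + 2 * μm ^ 2 - 11 := by
      nlinarith [mul_pos hμ hμm, mul_pos hμ hμ]
    nlinarith [mul_pos (sub_pos.2 hlt) hFμ]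
  · intro h
    have hFμ : 0 ≤ 2 * μ ^ 2 + 2 * μ * μm + 2 * μm ^ 2 - 11 := by
      nlinarith [mul_pos hμ hμm, mul_pos hμ hμ]
    nlinarith [mul_nonneg (sub_nonneg.2 h) hFμ]

lemma aux_root4 (μm μ : ℝ) (hμm : 0 < μm) (hμ : 0 < μ)
    (hroot : 24 + 66 * μm + 24 * μm ^ 2 - 9 * μm ^ 3 = 0) :
    (0 ≤ 24 + 66 * μ + 24 * μ ^ 2 - 9 * μ ^ 3 ↔ μ ≤ μm) := by
  have hF : 0 < 9 * μm ^ 2 - 24 * μm - 66 := by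
    nlinarith [mul_pos hμm hμm, hμm]
  have hμm3 : 3 < μm := by nlinarith [hF, hμm]
  constructor
  · intro h
    by_contra hlt
    push_neg at hlt
    have hFμ : 0 < 9 * μ ^ 2 + 9 * μ * μm + 9 * μm ^ 2 - 24 * μ - 24 * μm - 66 := by
      nlinarith [mul_nonneg hμ.le (by linarith : (0:ℝ) ≤ μm - 3), sq_nonneg μ]
    nlinarith [mul_pos (sub_pos.2 hlt) hFμ]
  · intro h
    have hFμ : 0 ≤ 9 * μ ^ 2 + 9 * μ * μm + 9 * μm ^ 2 - 24 * μ - 24 * μm - 66 := by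
      nlinarith [mul_nonneg hμ.le (by linarith : (0:ℝ) ≤ μm - 3), sq_nonneg μ]
    nlinarith [mul_nonneg (sub_nonneg.2 h) hFμ]

lemma aux_root5 (μm μ : ℝ) (hμm : 0 < μm) (hμ : 0 < μ)
    (hroot : 6 + 22 * μm + 15 * μm ^ 2 - μm ^ 3 = 0) :
    (0 ≤ 6 + 22 * μ + 15 * μ ^ 2 - μ ^ 3 ↔ μ ≤ μm) := by
  have hF : 0 < μm ^ 2 - 15 * μm - 22 := by
    nlinarith [mul_pos hμm hμm, hμm]
  have hμm16 : 16 < μm := by nlinarith [hF, hμm]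
  constructor
  · intro h
    by_contra hlt
    push_neg at hlt
    have hFμ : 0 < μ ^ 2 + μ * μm + μm ^ 2 - 15 * μ - 15 * μm - 22 := by
      nlinarith [mul_nonneg hμ.le (by linarith : (0:ℝ) ≤ μm - 16), sq_nonneg μ]
    nlinarith [mul_pos (sub_pos.2 hlt) hFμ]
  · intro h
    have hFμ : 0 ≤ μ ^ 2 + μ * μm + μm ^ 2 - 15 * μ - 15 * μm - 22 := by
      nlinarith [mul_nonneg hμ.le (by linarith : (0:ℝ) ≤ μm - 16), sq_nonneg μ]
    nlinarith [mul_nonneg (sub_nonneg.2 h) hFμ]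

set_option maxHeartbeats 3200000 in
/-- Localization of the roots of `P_μ^m` for type `I_{1,3}`: for `m ≥ 6` all
roots lie in `{Re η ≤ 1/2}` for every `μ > 0`; for `1 ≤ m ≤ 5` this holds iff
`0 < μ ≤ μ_m`, `μ_m` being the unique positive root of `q_m`. -/
theorem PI13_roots_localization :
    (∀ m : ℕ, 6 ≤ m → ∀ μ : ℝ, 0 < μ →
      ∀ η : ℂ, PI13c m μ η = 0 → η.re ≤ 1 / 2) ∧
    (∀ m : ℕ, 1 ≤ m → m ≤ 5 → ∀ μm : ℝ, 0 < μm → qI13 m μm = 0 →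
      ∀ μ : ℝ, 0 < μ →
        ((∀ η : ℂ, PI13c m μ η = 0 → η.re ≤ 1 / 2) ↔ μ ≤ μm)) := by
  have keyP : ∀ (m : ℕ) (μ : ℝ), 0 < μ →
      ((∀ η : ℂ, PI13c m μ η = 0 → η.re ≤ 1 / 2) ↔
        (0 ≤ 2 * (6 * ((m : ℝ) + 1) * ((m : ℝ) + 2) * (1 - μ) * μ ^ 2) +
            3 * (((m : ℝ) + 1) * ((m : ℝ) + 2) * ((m : ℝ) + 3) * μ ^ 3) ∧
          0 ≤ 4 * (((m : ℝ) + 1) * μ * (1 - μ) * (11 - 7 * μ)) +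
            4 * (6 * ((m : ℝ) + 1) * ((m : ℝ) + 2) * (1 - μ) * μ ^ 2) +
            3 * (((m : ℝ) + 1) * ((m : ℝ) + 2) * ((m : ℝ) + 3) * μ ^ 3) ∧
          0 ≤ 8 * ((1 - μ) * (2 - μ) * (3 - μ)) +
            4 * (((m : ℝ) + 1) * μ * (1 - μ) * (11 - 7 * μ)) +
            2 * (6 * ((m : ℝ) + 1) * ((m : ℝ) + 2) * (1 - μ) * μ ^ 2) +
            ((m : ℝ) + 1) * ((m : ℝ) + 2) * ((m : ℝ) + 3) * μ ^ 3 ∧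
          (8 * ((1 - μ) * (2 - μ) * (3 - μ)) +
              4 * (((m : ℝ) + 1) * μ * (1 - μ) * (11 - 7 * μ)) +
              2 * (6 * ((m : ℝ) + 1) * ((m : ℝ) + 2) * (1 - μ) * μ ^ 2) +
              ((m : ℝ) + 1) * ((m : ℝ) + 2) * ((m : ℝ) + 3) * μ ^ 3) *
            (((m : ℝ) + 1) * ((m : ℝ) + 2) * ((m : ℝ) + 3) * μ ^ 3) ≤
            (2 * (6 * ((m : ℝ) + 1) * ((m : ℝ) + 2) * (1 - μ) * μ ^ 2) +
              3 * (((m : ℝ) + 1) * ((m : ℝ) + 2) * ((m : ℝ) + 3) * μ ^ 3)) *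
            (4 * (((m : ℝ) + 1) * μ * (1 - μ) * (11 - 7 * μ)) +
              4 * (6 * ((m : ℝ) + 1) * ((m : ℝ) + 2) * (1 - μ) * μ ^ 2) +
              3 * (((m : ℝ) + 1) * ((m : ℝ) + 2) * ((m : ℝ) + 3) * μ ^ 3)))) := by
    intro m μ hμ
    have hd : 0 < ((m : ℝ) + 1) * ((m : ℝ) + 2) * ((m : ℝ) + 3) * μ ^ 3 := by positivity
    have hk := aux_key ((1 - μ) * (2 - μ) * (3 - μ))
      (((m : ℝ) + 1) * μ * (1 - μ) * (11 - 7 * μ))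
      (6 * ((m : ℝ) + 1) * ((m : ℝ) + 2) * (1 - μ) * μ ^ 2)
      (((m : ℝ) + 1) * ((m : ℝ) + 2) * ((m : ℝ) + 3) * μ ^ 3) hd
    constructor
    · intro h
      have h' := hk.1 (fun η hη => h η (by rw [aux_PI13c_eq m μ η]; exact hη))
      obtain ⟨h1, h2, h3, h4⟩ := h'
      exact ⟨by linarith, by linarith, by linarith, by nlinarith [h4]⟩
    · intro h η hη
      obtain ⟨h1, h2, h3, h4⟩ := h
      exact hk.2 ⟨by linarith, by linarith, by linarith, by nlinarith [h4]⟩ η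
        (by rw [← aux_PI13c_eq m μ η]; exact hη)
  constructor
  · -- the case m ≥ 6
    intro m hm μ hμ
    have hM : (6 : ℝ) ≤ (m : ℝ) := by exact_mod_cast hm
    refine (keyP m μ hμ).2 ⟨?_, ?_, ?_, ?_⟩
    · exact aux_ineq_I (m : ℝ) μ (by linarith) hμ.le
    · exact aux_ineq_II (m : ℝ) μ (by linarith) hμ.le
    · exact aux_ineq_q8 (m : ℝ) μ hM hμ.le
    · exact aux_ineq_IV (m : ℝ) μ (by linarith) hμ.le
  · -- the case 1 ≤ m ≤ 5
    intro m hm1 hm5 μm hμm hq μ hμ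
    rw [keyP m μ hμ]
    have hq' : PI13 m μm (1 / 2) = 0 := hq
    unfold PI13 at hq'
    interval_cases m <;> push_cast at hq' ⊢
    · -- m = 1
      have hr : 48 - 24 * μm ^ 2 = 0 := by linear_combination 8 * hq'
      have hiff := aux_root1 μm μ hμm hμ hr
      constructor
      · rintro ⟨-, -, c3, -⟩
        exact hiff.1 (by linarith [c3])
      · intro h
        have hq8 : 0 ≤ 48 - 24 * μ ^ 2 := hiff.2 h
        refine ⟨?_, ?_, by linarith, ?_⟩
        · have := aux_ineq_I 1 μ le_rfl hμ.le; linarith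
        · nlinarith [mul_nonneg hμ.le hq8, pow_nonneg hμ.le 3, hμ.le]
        · nlinarith [mul_nonneg (pow_nonneg hμ.le 3) hq8, pow_nonneg hμ.le 3,
            pow_nonneg hμ.le 4, pow_nonneg hμ.le 5]
    · -- m = 2
      have hr : 12 + 11 * μm - 6 * μm ^ 2 - 2 * μm ^ 3 = 0 := by linear_combination 2 * hq'
      have hiff := aux_root2 μm μ hμm hμ hr
      constructor
      · rintro ⟨-, -, c3, -⟩
        exact hiff.1 (by linarith [c3])
      · intro h
        have hq8 : 0 ≤ 12 + 11 * μ - 6 * μ ^ 2 - 2 * μ ^ 3 := hiff.2 h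
        refine ⟨?_, ?_, by linarith, ?_⟩
        · have := aux_ineq_I 2 μ (by norm_num) hμ.le; linarith
        · nlinarith [mul_nonneg hμ.le hq8, pow_nonneg hμ.le 4, pow_nonneg hμ.le 3,
            pow_nonneg hμ.le 2, hμ.le]
        · nlinarith [mul_nonneg (pow_nonneg hμ.le 3) hq8, pow_nonneg hμ.le 3,
            pow_nonneg hμ.le 4, pow_nonneg hμ.le 5, pow_nonneg hμ.le 6]
    · -- m = 3
      have hr : 6 + 11 * μm - 2 * μm ^ 3 = 0 := by linear_combination hq'
      have hiff := aux_root3 μm μ hμm hμ hr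
      constructor
      · rintro ⟨-, -, c3, -⟩
        exact hiff.1 (by linarith [c3])
      · intro h
        have hq8 : 0 ≤ 6 + 11 * μ - 2 * μ ^ 3 := hiff.2 h
        refine ⟨?_, ?_, by linarith, ?_⟩
        · have := aux_ineq_I 3 μ (by norm_num) hμ.le; linarith
        · -- 0 ≤ 176 μ + 192 μ² - 8 μ³ given 2 μ³ ≤ 6 + 11 μ
          rcases le_or_gt μ 1 with h1 | h1
          · nlinarith [mul_nonneg (mul_nonneg hμ.le hμ.le) (sub_nonneg.2 h1),
              mul_nonneg hμ.le hμ.le]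
          · nlinarith [mul_nonneg (sub_nonneg.2 h1.le) hq8, hq8, mul_pos hμ hμ]
        · have := aux_ineq_IV 3 μ le_rfl hμ.le; nlinarith [this]
    · -- m = 4
      have hr : 24 + 66 * μm + 24 * μm ^ 2 - 9 * μm ^ 3 = 0 := by linear_combination 4 * hq'
      have hiff := aux_root4 μm μ hμm hμ hr
      constructor
      · rintro ⟨-, -, c3, -⟩
        exact hiff.1 (by linarith [c3])
      · intro h
        have hq8 : 0 ≤ 24 + 66 * μ + 24 * μ ^ 2 - 9 * μ ^ 3 := hiff.2 h
        refine ⟨?_, ?_, by linarith, ?_⟩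
        · have := aux_ineq_I 4 μ (by norm_num) hμ.le; linarith
        · have := aux_ineq_II 4 μ le_rfl hμ.le; linarith
        · have := aux_ineq_IV 4 μ (by norm_num) hμ.le; nlinarith [this]
    · -- m = 5
      have hr : 6 + 22 * μm + 15 * μm ^ 2 - μm ^ 3 = 0 := by linear_combination hq'
      have hiff := aux_root5 μm μ hμm hμ hr
      constructor
      · rintro ⟨-, -, c3, -⟩
        exact hiff.1 (by linarith [c3])
      · intro h
        have hq8 : 0 ≤ 6 + 22 * μ + 15 * μ ^ 2 - μ ^ 3 := hiff.2 h
        refine ⟨?_, ?_, by linarith, ?_⟩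
        · have := aux_ineq_I 5 μ (by norm_num) hμ.le; linarith
        · have := aux_ineq_II 5 μ (by norm_num) hμ.le; linarith
        · have := aux_ineq_IV 5 μ (by norm_num) hμ.le; nlinarith [this]
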